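/- arXiv:1906.07522 — 6 statements merged into one kernel-verified Lean document; each statement's English description precedes it below -/
import Mathlib

section
/- Let λ > 0 with λ ≠ 1. There is no holomorphic function f from the upper half-plane ℍ = {z ∈ ℂ : Im z > 0} into itself such that f(z + 2π) = λ·f(z) for all z ∈ ℍ. -/
/-!
Schwarz–Pick: a holomorphic self-map of the upper half-plane does not increase the
pseudo-hyperbolic distance `ρ(a, z) = |z - a| / |z - conj a|`. Translating by `2π` moves a
point `a` by `ρ(a, a + 2π) ≤ π / Im a`, which tends to `0` as `Im a → ∞`, whereas scaling by
`λ` moves every point `w` by `ρ(w, λ w) ≥ |λ - 1| / (λ + 1)`. So `f (a + 2π) = λ f a` fails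
for `Im a` large.
-/

open Complex ComplexConjugate Metric Set

namespace UpperHalfPlaneSchwarzPick

/-- The Möbius map from the upper half-plane onto the unit disk sending `a` to `0`;
`‖toDisk a z‖` is the pseudo-hyperbolic distance from `a` to `z`. -/
noncomputable def toDisk (a z : ℂ) : ℂ := (z - a) / (z - conj a)

noncomputable def ofDisk (a u : ℂ) : ℂ := (a - u * conj a) / (1 - u)

lemma sub_conj_ne_zero {a z : ℂ} (ha : 0 < a.im) (hz : 0 < z.im) : z - conj a ≠ 0 := by
  intro h
  have him : (z - conj a).im = z.im + a.im := by simp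
  rw [h, zero_im] at him
  linarith

@[simp]
lemma toDisk_self (a : ℂ) : toDisk a a = 0 := by simp [toDisk]

@[simp]
lemma ofDisk_zero (a : ℂ) : ofDisk a 0 = a := by simp [ofDisk]

lemma ofDisk_toDisk {a z : ℂ} (ha : 0 < a.im) (hz : 0 < z.im) : ofDisk a (toDisk a z) = z := by
  have hz' := sub_conj_ne_zero ha hz
  have ha' := sub_conj_ne_zero ha ha
  have h1 : 1 - toDisk a z = (a - conj a) / (z - conj a) := by
    rw [toDisk]; field_simp; ring
  rw [ofDisk, h1, toDisk]
  field_simp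
  ring

lemma norm_toDisk_lt_one {a z : ℂ} (ha : 0 < a.im) (hz : 0 < z.im) : ‖toDisk a z‖ < 1 := by
  rw [toDisk, norm_div, div_lt_one (norm_pos_iff.2 (sub_conj_ne_zero ha hz)),
    ← sq_lt_sq₀ (norm_nonneg _) (norm_nonneg _), Complex.sq_norm, Complex.sq_norm]
  simp only [normSq_apply, sub_re, sub_im, conj_re, conj_im]
  nlinarith

lemma im_ofDisk_pos {a u : ℂ} (ha : 0 < a.im) (hu : ‖u‖ < 1) : 0 < (ofDisk a u).im := by
  have hu2 : u.re * u.re + u.im * u.im < 1 := by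
    simpa [Complex.sq_norm, normSq_apply] using (sq_lt_one_iff₀ (norm_nonneg u)).2 hu
  have h1u : (1 : ℂ) - u ≠ 0 := sub_ne_zero.2 fun h => by simp [← h] at hu
  rw [ofDisk, div_im, ← sub_div]
  apply div_pos _ (normSq_pos.2 h1u)
  simp only [sub_re, sub_im, mul_re, mul_im, conj_re, conj_im, one_re, one_im]
  nlinarith

lemma differentiableOn_toDisk {a : ℂ} (ha : 0 < a.im) :
    DifferentiableOn ℂ (toDisk a) {z | 0 < z.im} :=
  (differentiableOn_id.sub_const a).div (differentiableOn_id.sub_const _)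
    fun _ hz => sub_conj_ne_zero ha hz

lemma differentiableOn_ofDisk (a : ℂ) : DifferentiableOn ℂ (ofDisk a) (ball 0 1) :=
  ((differentiableOn_const a).sub (differentiableOn_id.mul_const _)).div
    ((differentiableOn_const 1).sub differentiableOn_id)
    fun _ hu => sub_ne_zero.2 fun h => by simp [← h] at hu

lemma mapsTo_ofDisk {a : ℂ} (ha : 0 < a.im) : MapsTo (ofDisk a) (ball 0 1) {z | 0 < z.im} :=
  fun _ hu => im_ofDisk_pos ha (mem_ball_zero_iff.1 hu)

theorem norm_toDisk_map_le {f : ℂ → ℂ} (hf : DifferentiableOn ℂ f {z | 0 < z.im})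
    (hmaps : MapsTo f {z | 0 < z.im} {z | 0 < z.im}) {a z : ℂ} (ha : 0 < a.im)
    (hz : 0 < z.im) : ‖toDisk (f a) (f z)‖ ≤ ‖toDisk a z‖ := by
  have hfa : 0 < (f a).im := hmaps ha
  set g : ℂ → ℂ := toDisk (f a) ∘ f ∘ ofDisk a
  have hg : DifferentiableOn ℂ g (ball 0 1) :=
    (differentiableOn_toDisk hfa).comp (hf.comp (differentiableOn_ofDisk a) (mapsTo_ofDisk ha))
      (hmaps.comp (mapsTo_ofDisk ha))
  have hg_maps : MapsTo g (ball 0 1) (closedBall 0 1) := fun u hu =>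
    mem_closedBall_zero_iff.2 (norm_toDisk_lt_one hfa (hmaps (mapsTo_ofDisk ha hu))).le
  have hg0 : g 0 = 0 := by simp [g]
  have hgz : g (toDisk a z) = toDisk (f a) (f z) := by simp [g, ofDisk_toDisk ha hz]
  rw [← hgz]
  exact Complex.norm_le_norm_of_mapsTo_ball hg hg_maps hg0 (norm_toDisk_lt_one ha hz)

lemma norm_toDisk_add_ofReal_le {a : ℂ} (ha : 0 < a.im) (t : ℝ) :
    ‖toDisk a (a + t)‖ ≤ |t| / (2 * a.im) := by
  have him : (a + t - conj a).im = 2 * a.im := by simp only [sub_im, add_im, ofReal_im, conj_im]; ring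
  rw [toDisk, norm_div, add_sub_cancel_left, norm_real, Real.norm_eq_abs]
  gcongr
  calc 2 * a.im = |(a + t - conj a).im| := by rw [him, abs_of_pos (by positivity)]
    _ ≤ ‖a + t - conj a‖ := abs_im_le_norm _

lemma le_norm_toDisk_ofReal_mul {lam : ℝ} (hlam : 0 < lam) {w : ℂ} (hw : 0 < w.im) :
    |lam - 1| / (lam + 1) ≤ ‖toDisk w (lam * w)‖ := by
  have hlw : 0 < ((lam : ℂ) * w).im := by simpa using mul_pos hlam hw
  have hden : ‖(lam : ℂ) * w - conj w‖ ≤ (lam + 1) * ‖w‖ :=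
    calc ‖(lam : ℂ) * w - conj w‖ ≤ ‖(lam : ℂ) * w‖ + ‖conj w‖ := norm_sub_le _ _
      _ = (lam + 1) * ‖w‖ := by
        rw [norm_mul, norm_real, Real.norm_of_nonneg hlam.le, Complex.norm_conj]; ring
  have hnum : (lam : ℂ) * w - w = ((lam - 1 : ℝ) : ℂ) * w := by push_cast; ring
  rw [toDisk, norm_div, hnum, norm_mul, norm_real, Real.norm_eq_abs,
    div_le_div_iff₀ (by linarith) (norm_pos_iff.2 (sub_conj_ne_zero hw hlw))]
  calc |lam - 1| * ‖(lam : ℂ) * w - conj w‖ ≤ |lam - 1| * ((lam + 1) * ‖w‖) := by gcongr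
    _ = |lam - 1| * ‖w‖ * (lam + 1) := by ring

end UpperHalfPlaneSchwarzPick

open UpperHalfPlaneSchwarzPick in
/-- There is no holomorphic self-map `f` of the upper half-plane with `f(z + 2π) = λ f(z)`
for `λ > 0`, `λ ≠ 1`: the monodromy of a developing map cannot be hyperbolic. -/
theorem no_hyperbolic_monodromy (lam : ℝ) (hlam : 0 < lam) (hne : lam ≠ 1) :
    ¬ ∃ f : ℂ → ℂ,
      DifferentiableOn ℂ f {z : ℂ | 0 < z.im} ∧
      (∀ z : ℂ, 0 < z.im → 0 < (f z).im) ∧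
      (∀ z : ℂ, 0 < z.im → f (z + 2 * Real.pi) = (lam : ℂ) * f z) := by
  rintro ⟨f, hf, hmaps, hper⟩
  set δ := |lam - 1| / (lam + 1)
  have hδ : 0 < δ := div_pos (abs_pos.2 (sub_ne_zero.2 hne)) (by linarith)
  set a : ℂ := ((2 * Real.pi / δ : ℝ) : ℂ) * I
  have ha : 0 < a.im := by simp only [a, mul_im, ofReal_re, ofReal_im, I_re, I_im]; positivity
  have ha' : 0 < (a + 2 * Real.pi).im := by simpa using ha
  have hmove : ‖toDisk a (a + 2 * Real.pi)‖ ≤ δ / 2 := by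
    have h := norm_toDisk_add_ofReal_le ha (2 * Real.pi)
    have him : a.im = 2 * Real.pi / δ := by simp [a]
    rw [him, abs_of_pos Real.two_pi_pos] at h
    push_cast at h
    calc _ ≤ 2 * Real.pi / (2 * (2 * Real.pi / δ)) := h
      _ = δ / 2 := by field_simp
  have hpick := norm_toDisk_map_le hf (fun z hz => hmaps z hz) ha ha'
  rw [hper a ha] at hpick
  have hscale := le_norm_toDisk_ofReal_mul hlam (hmaps a ha)
  linarith
end

section
/- There is no holomorphic function G on the punctured unit disk 𝔻* = {w ∈ ℂ : 0 < |w| < 1} such that Im G(w) > −log|w| for all w ∈ 𝔻*. (Equivalently, Im G(w) − log(1/|w|) > 0 cannot hold throughout 𝔻*.) -/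
/-!
Since `-log |w| → +∞` as `w → 0`, so does `Im G`, hence each `exp (i G / n)` tends to `0` at the
origin and, by Riemann's removable singularity theorem, extends analytically by `0`. The extension
of `exp (i G)` is then the `n`-th power of a function vanishing at `0` for every `n ≥ 1`,
so it vanishes there to order at least `n` for every `n`, i.e. identically near `0`. This is absurd, since
`exp (i G)` has no zeros.
-/

open Complex Filter Function Metric Set
open scoped Topology

theorem Complex.analyticAt_update_zero_of_tendsto {E : Type*} [NormedAddCommGroup E]
    [NormedSpace ℂ E] [CompleteSpace E] {f : ℂ → E} {s : Set ℂ} {c : ℂ} (hs : s ∈ 𝓝 c)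
    (hd : DifferentiableOn ℂ f (s \ {c})) (hf : Tendsto f (𝓝[≠] c) (𝓝 0)) :
    AnalyticAt ℂ (update f c 0) c := by
  have hupd : DifferentiableOn ℂ (update f c 0) s :=
    (differentiableOn_compl_singleton_and_continuousAt_iff hs).1
      ⟨hd.congr fun _ hz => update_of_ne hz.2 _ _, continuousAt_update_same.2 hf⟩
  exact hupd.analyticAt hs

theorem analyticOrderAt_eq_top_of_forall_pow_eq {𝕜 : Type*} [NontriviallyNormedField 𝕜]
    {f : 𝕜 → 𝕜} {c : 𝕜}
    (hroot : ∀ n ≠ 0, ∃ g : 𝕜 → 𝕜, AnalyticAt 𝕜 g c ∧ g c = 0 ∧ g ^ n =ᶠ[𝓝 c] f) :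
    analyticOrderAt f c = ⊤ := by
  by_contra hfin
  obtain ⟨k, hk⟩ := ENat.ne_top_iff_exists.1 hfin
  obtain ⟨g, hg, hg0, hgf⟩ := hroot (k + 1) k.succ_ne_zero
  have hg_pos : 1 ≤ analyticOrderAt g c :=
    Order.one_le_iff_ne_zero.2 (analyticOrderAt_ne_zero.2 ⟨hg, hg0⟩)
  have : ((k + 1 : ℕ) : ℕ∞) ≤ k := calc
    ((k + 1 : ℕ) : ℕ∞) = (k + 1) • 1 := by simp
    _ ≤ (k + 1) • analyticOrderAt g c := by gcongr
    _ = analyticOrderAt f c := by rw [← analyticOrderAt_pow hg, analyticOrderAt_congr hgf]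
    _ = k := hk.symm
  exact absurd (ENat.natCast_le_natCast.1 this) (by omega)

theorem tendsto_neg_log_norm_nhdsNE_zero :
    Tendsto (fun w : ℂ => -Real.log ‖w‖) (𝓝[≠] 0) atTop :=
  tendsto_neg_atBot_atTop.comp (Real.tendsto_log_nhdsGT_zero.comp tendsto_norm_nhdsNE_zero)

theorem Complex.tendsto_exp_I_mul_div_natCast_of_tendsto_im {α : Type*} {l : Filter α}
    {G : α → ℂ} (hG : Tendsto (fun x => (G x).im) l atTop) {n : ℕ} (hn : n ≠ 0) :
    Tendsto (fun x => exp (I * G x / n)) l (𝓝 0) := by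
  have hre : ∀ x, (I * G x / n).re = -(G x).im / n := fun x => by simp
  rw [tendsto_exp_nhds_zero_iff]
  simp only [hre]
  exact (tendsto_neg_atTop_atBot.comp hG).atBot_div_const (by positivity)

noncomputable def expRoot (G : ℂ → ℂ) (n : ℕ) : ℂ → ℂ :=
  update (fun w => exp (I * G w / n)) 0 0

theorem expRoot_ne_zero (G : ℂ → ℂ) (n : ℕ) {w : ℂ} (hw : w ≠ 0) : expRoot G n w ≠ 0 := by
  simp [expRoot, update_of_ne hw, exp_ne_zero]

theorem expRoot_pow (G : ℂ → ℂ) {n : ℕ} (hn : n ≠ 0) : expRoot G n ^ n = expRoot G 1 := by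
  ext w
  rcases eq_or_ne w 0 with rfl | hw
  · simp [expRoot, hn]
  · simp only [expRoot, Pi.pow_apply, update_of_ne hw, ← exp_nat_mul, Nat.cast_one, div_one]
    congr 1
    field_simp

theorem analyticAt_expRoot {G : ℂ → ℂ} {s : Set ℂ} (hs : s ∈ 𝓝 0)
    (hd : DifferentiableOn ℂ G (s \ {0})) (hG : Tendsto (fun w => (G w).im) (𝓝[≠] 0) atTop)
    {n : ℕ} (hn : n ≠ 0) : AnalyticAt ℂ (expRoot G n) 0 :=
  analyticAt_update_zero_of_tendsto hs (((differentiableOn_const I).mul hd).div_const _).cexp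
    (tendsto_exp_I_mul_div_natCast_of_tendsto_im hG hn)

/-- There is no holomorphic function `G` on the punctured unit disk with
`Im G(w) > -log |w|` throughout the punctured disk. -/
theorem no_holomorphic_im_gt_neg_log :
    ¬ ∃ G : ℂ → ℂ,
      DifferentiableOn ℂ G {w : ℂ | 0 < ‖w‖ ∧ ‖w‖ < 1} ∧
      ∀ w : ℂ, 0 < ‖w‖ → ‖w‖ < 1 →
        -Real.log (‖w‖) < (G w).im := by
  rintro ⟨G, hGd, hGb⟩
  have hdisk : {w : ℂ | 0 < ‖w‖ ∧ ‖w‖ < 1} = ball 0 1 \ {0} := by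
    ext w
    simp [norm_pos_iff, and_comm]
  have hG : Tendsto (fun w => (G w).im) (𝓝[≠] 0) atTop := by
    refine tendsto_atTop_mono' _ ?_ tendsto_neg_log_norm_nhdsNE_zero
    filter_upwards [hdisk ▸ sdiff_mem_nhdsWithin_compl (ball_mem_nhds (0 : ℂ) one_pos) {0}]
      with w hw
    exact (hGb w hw.1 hw.2).le
  have htop : analyticOrderAt (expRoot G 1) 0 = ⊤ :=
    analyticOrderAt_eq_top_of_forall_pow_eq fun n hn =>
      ⟨expRoot G n, analyticAt_expRoot (ball_mem_nhds 0 one_pos) (hdisk ▸ hGd) hG hn,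
        update_self .., (expRoot_pow G hn).eventuallyEq⟩
  obtain ⟨w, hw0, hw⟩ : ∃ w, expRoot G 1 w = 0 ∧ w ≠ 0 :=
    (((analyticOrderAt_eq_top.1 htop).filter_mono nhdsWithin_le_nhds).and
      (self_mem_nhdsWithin : {(0 : ℂ)}ᶜ ∈ 𝓝[≠] 0)).exists
  exact expRoot_ne_zero G 1 hw hw0
end

section
/- There is no holomorphic function f from the upper half-plane ℍ = {z ∈ ℂ : Im z > 0} into itself such that f(z + 2π) = f(z) − 2π for all z ∈ ℍ. -/
/-!
Adding `z` to `f` turns the monodromy `f (z + 2π) = f z - 2π` into genuine `2π`-periodicity of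
`g = f + id`. By Cauchy's theorem on the rectangles `[0, 2π] × [a, b]`, whose vertical sides cancel
by periodicity, the integral of `g` over a horizontal period segment does not depend on its
height `y`. But `Im g z > Im z`, so that integral has imaginary part at least `2π y`, unbounded in `y`.
-/

open Complex Set intervalIntegral
open scoped Interval

namespace Complex

section

variable {E : Type*} [NormedAddCommGroup E] [NormedSpace ℂ E] {g : ℂ → E}
  {T a b : ℝ}

theorem integral_horizontal_eq_of_periodic (hg : DifferentiableOn ℂ g ([[0, T]] ×ℂ [[a, b]]))
    (hper : ∀ y ∈ [[a, b]], g (T + y * I) = g (y * I)) :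
    ∫ x in (0 : ℝ)..T, g (x + a * I) = ∫ x in (0 : ℝ)..T, g (x + b * I) := by
  have hrect := integral_boundary_rect_eq_zero_of_differentiableOn g (a * I) (T + b * I)
    (by simpa using hg)
  simp only [mul_re, mul_im, add_re, add_im, ofReal_re, ofReal_im, I_re, I_im, mul_zero, mul_one,
    sub_self, add_zero, zero_add, ofReal_zero] at hrect
  rw [integral_congr hper] at hrect
  simpa [sub_eq_zero] using hrect

lemma reProdIm_uIcc_subset_upperHalfPlane {s : Set ℝ} (ha : 0 < a) (hb : 0 < b) :
    s ×ℂ [[a, b]] ⊆ {z : ℂ | 0 < z.im} := fun _ hz =>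
  (lt_min ha hb).trans_le (mem_reProdIm.1 hz).2.1

theorem integral_horizontal_eq_of_periodic_upperHalfPlane
    (hg : DifferentiableOn ℂ g {z : ℂ | 0 < z.im})
    (hper : ∀ z : ℂ, 0 < z.im → g (z + T) = g z) (ha : 0 < a) (hb : 0 < b) :
    ∫ x in (0 : ℝ)..T, g (x + a * I) = ∫ x in (0 : ℝ)..T, g (x + b * I) := by
  refine integral_horizontal_eq_of_periodic (hg.mono (reProdIm_uIcc_subset_upperHalfPlane ha hb))
    fun y hy => ?_
  have hy : 0 < y := (lt_min ha hb).trans_le hy.1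
  simpa [add_comm] using hper (y * I) (by simpa using hy)

end

lemma mul_le_im_integral_horizontal {g : ℂ → ℂ} {T y : ℝ}
    (hg : ContinuousOn g {z : ℂ | 0 < z.im}) (him : ∀ z : ℂ, 0 < z.im → z.im ≤ (g z).im)
    (hT : 0 ≤ T) (hy : 0 < y) :
    T * y ≤ (∫ x in (0 : ℝ)..T, g (x + y * I)).im := by
  have hslice : Continuous fun x : ℝ => g (x + y * I) :=
    hg.comp_continuous (by fun_prop) fun x => by simpa using hy
  rw [← RCLike.im_to_complex, ← intervalIntegral_im (hslice.intervalIntegrable 0 T)]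
  calc T * y = ∫ _ in (0 : ℝ)..T, y := by simp
    _ ≤ ∫ x in (0 : ℝ)..T, (g (x + y * I)).im :=
      integral_mono_on hT intervalIntegrable_const
        ((continuous_im.comp hslice).intervalIntegrable 0 T)
        fun x _ => by simpa using him (x + y * I) (by simpa using hy)

end Complex

/-- There is no holomorphic self-map `f` of the upper half-plane with
`f(z + 2π) = f(z) - 2π`: parabolic monodromy with translation by `-2π` is impossible. -/
theorem no_parabolic_monodromy_neg :
    ¬ ∃ f : ℂ → ℂ,
      DifferentiableOn ℂ f {z : ℂ | 0 < z.im} ∧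
      (∀ z : ℂ, 0 < z.im → 0 < (f z).im) ∧
      (∀ z : ℂ, 0 < z.im → f (z + 2 * Real.pi) = f z - 2 * Real.pi) := by
  rintro ⟨f, hf, hpos, hper⟩
  set g : ℂ → ℂ := fun z => f z + z
  have hg : DifferentiableOn ℂ g {z : ℂ | 0 < z.im} := hf.add differentiableOn_id
  have hg_per : ∀ z : ℂ, 0 < z.im → g (z + (2 * Real.pi : ℝ)) = g z := fun z hz => by
    simp only [g, ofReal_mul, ofReal_ofNat, hper z hz]; ring
  have hg_im : ∀ z : ℂ, 0 < z.im → z.im ≤ (g z).im := fun z hz => by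
    simpa [g] using (hpos z hz).le
  set C := ∫ x in (0 : ℝ)..2 * Real.pi, g (x + (1 : ℝ) * I)
  obtain ⟨y, hy0, hy⟩ := exists_pos_lt_mul Real.two_pi_pos C.im
  have hbound := mul_le_im_integral_horizontal hg.continuousOn hg_im Real.two_pi_pos.le hy0
  rw [← integral_horizontal_eq_of_periodic_upperHalfPlane hg hg_per one_pos hy0] at hbound
  linarith
end

section
/- Let h be a holomorphic function on the unit disk 𝔻 = {w ∈ ℂ : |w| < 1} with h(0) ≠ 0, and let m ≥ 1 be an integer. Then there exists w ∈ 𝔻 with w ≠ 0 such that Im(h(w)/w^m) ≤ 0. (Equivalently, it is impossible that Im(h(w)/w^m) > 0 for all w in the punctured disk.) -/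
/-!
Choose a unit vector `v` with `v ^ m` a positive multiple of `i h(0)`. Along the ray `w = r v`, `h w / v ^ m` tends to `h 0 / v ^ m = -i ‖h 0‖` as `r → 0⁺`,
so its imaginary part is eventually negative, and dividing by `r ^ m > 0` keeps it negative.
-/

open Filter Topology

theorem Complex.exists_norm_eq_one_div_pow_eq_neg_norm_mul_I {c : ℂ} (hc : c ≠ 0) {m : ℕ}
    (hm : 0 < m) : ∃ v : ℂ, ‖v‖ = 1 ∧ c / v ^ m = -(‖c‖ * I) := by
  obtain ⟨v, hv⟩ := IsAlgClosed.exists_pow_nat_eq (I * c / ‖c‖) hm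
  refine ⟨v, ?_, ?_⟩
  · refine (pow_eq_one_iff_of_nonneg (norm_nonneg v) hm.ne').1 ?_
    rw [← norm_pow, hv, norm_div, norm_mul, norm_I, norm_real, norm_norm,
      one_mul, div_self (norm_ne_zero_iff.2 hc)]
  · rw [hv]
    field_simp
    rw [I_sq]
    ring

theorem tendsto_ofReal_mul_nhdsGT_nhdsNE {v : ℂ} (hv : v ≠ 0) :
    Tendsto (fun r : ℝ => (r : ℂ) * v) (𝓝[>] 0) (𝓝[≠] 0) := by
  refine tendsto_nhdsWithin_of_tendsto_nhds_of_eventually_within _ ?_ ?_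
  · simpa using ((by fun_prop : Continuous fun r : ℝ => (r : ℂ) * v).tendsto 0).mono_left
      (nhdsWithin_le_nhds (s := Set.Ioi 0))
  · filter_upwards [self_mem_nhdsWithin] with r (hr : 0 < r)
    exact mul_ne_zero (Complex.ofReal_ne_zero.2 hr.ne') hv

theorem frequently_im_div_pow_neg {f : ℂ → ℂ} {c : ℂ} (hf : Tendsto f (𝓝[≠] 0) (𝓝 c))
    (hc : c ≠ 0) {m : ℕ} (hm : 0 < m) : ∃ᶠ w in 𝓝[≠] 0, (f w / w ^ m).im < 0 := by
  obtain ⟨v, hv, hcv⟩ := Complex.exists_norm_eq_one_div_pow_eq_neg_norm_mul_I hc hm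
  have hv0 : v ≠ 0 := norm_ne_zero_iff.1 (by rw [hv]; exact one_ne_zero)
  have hray := tendsto_ofReal_mul_nhdsGT_nhdsNE hv0
  have him : Tendsto (fun r : ℝ => (f (r * v) / v ^ m).im) (𝓝[>] 0) (𝓝 (-‖c‖)) := by
    have := (Complex.continuous_im.tendsto _).comp ((hf.comp hray).div_const (v ^ m))
    simpa [Function.comp_def, hcv] using this
  refine hray.frequently (Eventually.frequently ?_)
  filter_upwards [him.eventually_lt_const (neg_neg_of_pos (norm_pos_iff.2 hc)),
    self_mem_nhdsWithin] with r hr (hr0 : 0 < r)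
  rw [mul_pow, div_mul_eq_div_div_swap, ← Complex.ofReal_pow, Complex.div_ofReal_im]
  exact div_neg_of_neg_of_pos hr (pow_pos hr0 m)

/-- A function with a pole of order `m ≥ 1` at `0`, written `h(w)/w^m` with `h(0) ≠ 0`,
cannot take values only in the open upper half-plane on the punctured disk. -/
theorem pole_not_upper_half_plane_valued (h : ℂ → ℂ)
    (hh : DifferentiableOn ℂ h (Metric.ball (0 : ℂ) 1))
    (h0 : h 0 ≠ 0) (m : ℕ) (hm : 1 ≤ m) :
    ∃ w ∈ Metric.ball (0 : ℂ) 1, w ≠ 0 ∧ (h w / w ^ m).im ≤ 0 := by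
  have hball : Metric.ball (0 : ℂ) 1 ∈ 𝓝 0 := Metric.ball_mem_nhds 0 one_pos
  have hlim : Tendsto h (𝓝[≠] 0) (𝓝 (h 0)) :=
    ((hh.continuousOn.continuousAt hball).tendsto).mono_left nhdsWithin_le_nhds
  obtain ⟨w, hw, hwball, hw0⟩ := ((frequently_im_div_pow_neg hlim h0 hm).and_eventually
    ((eventually_nhdsWithin_of_eventually_nhds hball).and self_mem_nhdsWithin)).exists
  exact ⟨w, hwball, hw0, hw.le⟩
end

section
/- Let G be a holomorphic function on the punctured unit disk 𝔻* = {w ∈ ℂ : 0 < |w| < 1} such that Im G(w) > log|w| for all w ∈ 𝔻* (equivalently, Im G(w) + log(1/|w|) > 0). Then G extends holomorphically to the full disk 𝔻 = {w : |w| < 1}; in particular 0 is a removable singularity of G. -/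
/-!
Since `Im G > log |w|`, the function `w ↦ w * exp (i G w)` is bounded by `1` on the punctured
disk, hence extends holomorphically across `0`, where it has the form `w ^ n * u w` with `u`
nonvanishing. Writing `u = exp L` near `0`, the function `K = i G - L` satisfies
`exp K = w ^ (n - 1)`, so `K' = (n - 1) / w`. As `K'` has a primitive, its integral over a small
circle vanishes, which forces `n = 1`; then `K' = 0` on the (connected) punctured disk, so `K` is
constant and `G = -i (K + L)` extends across `0`.
-/

open Complex Metric Set Filter Topology Function

lemma differentiableOn_update_of_eventuallyEq {𝕜 E F : Type*} [NontriviallyNormedField 𝕜]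
    [NormedAddCommGroup E] [NormedSpace 𝕜 E] [NormedAddCommGroup F] [NormedSpace 𝕜 F]
    [DecidableEq E] {f g : E → F} {s : Set E} {c : E} (hs : IsOpen s)
    (hf : DifferentiableOn 𝕜 f (s \ {c})) (hg : DifferentiableAt 𝕜 g c) (hfg : f =ᶠ[𝓝[≠] c] g) :
    DifferentiableOn 𝕜 (update f c (g c)) s := by
  intro z hz
  rcases eq_or_ne z c with rfl | hzc
  · have hupdate : update f z (g z) =ᶠ[𝓝 z] g := by
      rw [← nhdsNE_sup_pure, EventuallyEq, eventually_sup]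
      refine ⟨?_, by simp⟩
      filter_upwards [hfg, self_mem_nhdsWithin] with w hw hwz
      rw [update_of_ne hwz, hw]
    exact (hg.congr_of_eventuallyEq hupdate).differentiableWithinAt
  · have hfz : DifferentiableAt 𝕜 f z :=
      hf.differentiableAt ((hs.sdiff isClosed_singleton).mem_nhds ⟨hz, hzc⟩)
    have hupdate : update f c (g c) =ᶠ[𝓝 z] f := by
      filter_upwards [isOpen_compl_singleton.mem_nhds hzc] with w hw
      exact update_of_ne hw _ _
    exact (hfz.congr_of_eventuallyEq hupdate).differentiableWithinAt

lemma isPreconnected_ball_diff_zero (r : ℝ) : IsPreconnected (ball (0 : ℂ) r \ {0}) := by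
  rcases le_or_gt r 0 with hr | hr
  · simpa [ball_eq_empty.2 hr] using isPreconnected_empty
  have himage : exp '' {z : ℂ | z.re < Real.log r} = ball 0 r \ {0} := by
    ext w
    constructor
    · rintro ⟨z, hz, rfl⟩
      refine ⟨?_, exp_ne_zero z⟩
      rw [mem_ball_zero_iff, norm_exp]
      exact (Real.lt_log_iff_exp_lt hr).1 hz
    · rintro ⟨hw, hw0 : w ≠ 0⟩
      refine ⟨log w, ?_, exp_log hw0⟩
      rw [mem_ofPred_eq, log_re]
      exact Real.log_lt_log (norm_pos_iff.2 hw0) (mem_ball_zero_iff.1 hw)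
  rw [← himage]
  exact (convex_halfSpace_re_lt _).isPreconnected.image _ continuous_exp.continuousOn

lemma AnalyticAt.exists_exp_eventuallyEq {u : ℂ → ℂ} {c : ℂ} (hu : AnalyticAt ℂ u c)
    (hc : u c ≠ 0) : ∃ L : ℂ → ℂ, AnalyticAt ℂ L c ∧ ∀ᶠ z in 𝓝 c, exp (L z) = u z := by
  refine ⟨fun z => Complex.log (u z / u c) + Complex.log (u c), ?_, ?_⟩
  · exact ((hu.div_const).clog (by simp [hc, one_mem_slitPlane])).add analyticAt_const
  · filter_upwards [hu.continuousAt.eventually_ne hc] with z hz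
    rw [exp_add, exp_log (div_ne_zero hz hc), exp_log hc, div_mul_cancel₀ _ hc]

lemma hasDerivAt_of_exp_eventuallyEq_zpow {K : ℂ → ℂ} {m : ℤ} {z : ℂ} (hz : z ≠ 0)
    (hK : DifferentiableAt ℂ K z) (h : (fun w => exp (K w)) =ᶠ[𝓝 z] fun w => w ^ m) :
    HasDerivAt K (m / z) z := by
  have hexp : exp (K z) = z ^ m := h.eq_of_nhds
  have hderiv : exp (K z) * deriv K z = m * z ^ (m - 1) :=
    hK.hasDerivAt.cexp.unique ((hasDerivAt_zpow m z (.inl hz)).congr_of_eventuallyEq h)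
  rw [hexp, zpow_sub_one₀ hz] at hderiv
  have hK' : deriv K z = m / z :=
    mul_left_cancel₀ (zpow_ne_zero m hz) (hderiv.trans (by ring))
  exact hK' ▸ hK.hasDerivAt

lemma eq_zero_of_forall_hasDerivAt_div_sub {K : ℂ → ℂ} {m c : ℂ} {R : ℝ} (hR : 0 < R)
    (h : ∀ z ∈ sphere c R, HasDerivAt K (m / (z - c)) z) : m = 0 := by
  have hint : (∮ z in C(c, R), m / (z - c)) = 0 :=
    circleIntegral.integral_eq_zero_of_hasDerivWithinAt hR.le fun z hz =>
      (h z hz).hasDerivWithinAt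
  simp only [div_eq_mul_inv, circleIntegral.integral_const_mul,
    circleIntegral.integral_sub_center_inv c hR.ne'] at hint
  simpa [Real.pi_ne_zero, I_ne_zero] using hint

lemma exists_eqOn_const_of_exp_eq_zpow {K : ℂ → ℂ} {m : ℤ} {r : ℝ}
    (hK : DifferentiableOn ℂ K (ball 0 r \ {0}))
    (h : ∀ z ∈ ball (0 : ℂ) r \ {0}, exp (K z) = z ^ m) :
    ∃ a, ∀ z ∈ ball (0 : ℂ) r \ {0}, K z = a := by
  rcases le_or_gt r 0 with hr | hr
  · exact ⟨0, by simp [ball_eq_empty.2 hr]⟩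
  have hopen : IsOpen (ball (0 : ℂ) r \ {0}) := isOpen_ball.sdiff isClosed_singleton
  have hderiv : ∀ z ∈ ball (0 : ℂ) r \ {0}, HasDerivAt K (m / z) z := fun z hz =>
    hasDerivAt_of_exp_eventuallyEq_zpow hz.2 (hK.differentiableAt (hopen.mem_nhds hz))
      (eventually_of_mem (hopen.mem_nhds hz) h)
  have hm : (m : ℂ) = 0 := by
    refine eq_zero_of_forall_hasDerivAt_div_sub (K := K) (c := 0) (half_pos hr) fun z hz => ?_
    have hz' : ‖z‖ = r / 2 := mem_sphere_zero_iff_norm.1 hz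
    rw [sub_zero]
    refine hderiv z ⟨?_, ?_⟩
    · rw [mem_ball_zero_iff, hz']; linarith
    · rintro rfl; simp at hz'; linarith
  exact hopen.exists_is_const_of_deriv_eq_zero (isPreconnected_ball_diff_zero r) hK
    fun z hz => by simp [(hderiv z hz).deriv, hm]

lemma exists_eventuallyEq_pow_smul_of_bddAbove {E : Type*} [NormedAddCommGroup E]
    [NormedSpace ℂ E] [CompleteSpace E] {f : ℂ → E} {s : Set ℂ} {c : ℂ} (hs : s ∈ 𝓝 c)
    (hf : DifferentiableOn ℂ f (s \ {c})) (hb : BddAbove (norm ∘ f '' (s \ {c})))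
    (hf0 : ∃ᶠ z in 𝓝[≠] c, f z ≠ 0) :
    ∃ n : ℕ, ∃ u : ℂ → E, AnalyticAt ℂ u c ∧ u c ≠ 0 ∧
      ∀ᶠ z in 𝓝[≠] c, f z = (z - c) ^ n • u z := by
  set H := update f c (limUnder (𝓝[≠] c) f)
  have hHf : H =ᶠ[𝓝[≠] c] f := eventually_mem_nhdsWithin.mono fun z hz => update_of_ne hz _ _
  have hH_not_zero : ¬∀ᶠ z in 𝓝 c, H z = 0 := fun h =>
    hf0 ((h.filter_mono nhdsWithin_le_nhds).and hHf |>.mono fun z hz hfz => hfz (hz.2 ▸ hz.1))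
  obtain ⟨n, u, hu, hu0, hHu⟩ :=
    ((differentiableOn_update_limUnder_of_bddAbove hs hf hb).analyticAt
      hs).exists_eventuallyEq_pow_smul_nonzero_iff.2 hH_not_zero
  exact ⟨n, u, hu, hu0, hHf.symm.trans (hHu.filter_mono nhdsWithin_le_nhds)⟩

theorem exists_differentiableOn_eqOn_of_bddAbove_pow_mul_exp {F : ℂ → ℂ} {r : ℝ} {N : ℕ}
    (hF : DifferentiableOn ℂ F (ball 0 r \ {0}))
    (hb : BddAbove (norm ∘ (fun z => z ^ N * exp (F z)) '' (ball 0 r \ {0}))) :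
    ∃ g : ℂ → ℂ, DifferentiableOn ℂ g (ball 0 r) ∧ EqOn g F (ball 0 r \ {0}) := by
  rcases le_or_gt r 0 with hr | hr
  · exact ⟨F, by simp only [ball_eq_empty.2 hr, differentiableOn_empty], eqOn_refl _ _⟩
  have hf0 : ∀ᶠ z in 𝓝[≠] (0 : ℂ), z ^ N * exp (F z) ≠ 0 :=
    eventually_mem_nhdsWithin.mono fun z hz => mul_ne_zero (pow_ne_zero _ hz) (exp_ne_zero _)
  obtain ⟨n, u, hu, hu0, hFu⟩ := exists_eventuallyEq_pow_smul_of_bddAbove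
    (f := fun z => z ^ N * exp (F z)) (ball_mem_nhds 0 hr)
    ((differentiableOn_id.pow N).mul hF.cexp) hb hf0.frequently
  obtain ⟨L, hL, hLu⟩ := hu.exists_exp_eventuallyEq hu0
  obtain ⟨ρ, hρ, hball⟩ := eventually_nhds_iff_ball.1 ((eventually_nhdsWithin_iff.1 hFu).and
    (hLu.and (hL.eventually_analyticAt.and (ball_mem_nhds 0 hr))))
  have hK : ∀ z ∈ ball (0 : ℂ) ρ \ {0}, exp (F z - L z) = z ^ ((n : ℤ) - N) := by
    rintro z ⟨hz, hz0 : z ≠ 0⟩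
    obtain ⟨hFz, hLz, -, -⟩ := hball z hz
    replace hFz := hFz hz0
    rw [sub_zero, smul_eq_mul] at hFz
    rw [exp_sub, zpow_sub₀ hz0, zpow_natCast, zpow_natCast,
      div_eq_div_iff (exp_ne_zero _) (pow_ne_zero _ hz0), hLz]
    linear_combination hFz
  obtain ⟨a, ha⟩ := exists_eqOn_const_of_exp_eq_zpow
    ((hF.mono fun z hz => ⟨(hball z hz.1).2.2.2, hz.2⟩).sub
      fun z hz => (hball z hz.1).2.2.1.differentiableAt.differentiableWithinAt) hK
  have hFL : F =ᶠ[𝓝[≠] 0] fun z => a + L z := by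
    filter_upwards [sdiff_mem_nhdsWithin_compl (ball_mem_nhds 0 hρ) {0}] with z hz
    rw [← ha z hz, Pi.sub_apply, sub_add_cancel]
  exact ⟨update F 0 (a + L 0), differentiableOn_update_of_eventuallyEq isOpen_ball hF
    (hL.differentiableAt.const_add a) hFL, fun z hz => update_of_ne hz.2 _ _⟩

lemma norm_mul_exp_I_mul_lt_one {w ζ : ℂ} (hw : w ≠ 0) (h : Real.log ‖w‖ < ζ.im) :
    ‖w * exp (I * ζ)‖ < 1 := by
  rw [norm_mul, norm_exp, I_mul_re, ← Real.exp_log (norm_pos_iff.2 hw), ← Real.exp_add]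
  exact Real.exp_lt_one_iff.2 (by linarith)

/-- A holomorphic function `G` on the punctured unit disk with `Im G(w) > log |w|`
extends holomorphically across `0`. -/
theorem removable_of_im_gt_log (G : ℂ → ℂ)
    (hG : DifferentiableOn ℂ G {w : ℂ | 0 < ‖w‖ ∧ ‖w‖ < 1})
    (him : ∀ w : ℂ, 0 < ‖w‖ → ‖w‖ < 1 →
      Real.log (‖w‖) < (G w).im) :
    ∃ g : ℂ → ℂ, DifferentiableOn ℂ g (Metric.ball (0 : ℂ) 1) ∧
      ∀ w : ℂ, 0 < ‖w‖ → ‖w‖ < 1 → g w = G w := by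
  have hdisk : {w : ℂ | 0 < ‖w‖ ∧ ‖w‖ < 1} = ball 0 1 \ {0} := by
    ext w
    simp [norm_pos_iff, and_comm]
  rw [hdisk] at hG
  have hb : BddAbove (norm ∘ (fun z => z ^ 1 * exp (I * G z)) '' (ball 0 1 \ {0})) := by
    refine ⟨1, ?_⟩
    rintro _ ⟨w, ⟨hw, hw0 : w ≠ 0⟩, rfl⟩
    have hw1 : ‖w‖ < 1 := mem_ball_zero_iff.1 hw
    simpa using (norm_mul_exp_I_mul_lt_one hw0 (him w (norm_pos_iff.2 hw0) hw1)).le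
  obtain ⟨g, hg, hgG⟩ := exists_differentiableOn_eqOn_of_bddAbove_pow_mul_exp (hG.const_mul I) hb
  refine ⟨fun z => -I * g z, hg.const_mul _, fun w hw0 hw1 => ?_⟩
  show -I * g w = G w
  rw [hgG ⟨mem_ball_zero_iff.2 hw1, norm_pos_iff.1 hw0⟩, ← mul_assoc]
  simp
end

section
/- Let f be a holomorphic function from the upper half-plane ℍ = {z ∈ ℂ : Im z > 0} into itself satisfying f(z + 2π) = f(z) + 2π for all z ∈ ℍ. Then there exists a holomorphic function G on the full unit disk 𝔻 = {w ∈ ℂ : |w| < 1} such that f(z) = z + G(e^{iz}) for all z ∈ ℍ. -/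
/-!
On the upper half-plane `exp (I * f z)` has modulus at most `1` and period `2π`, so it is
`Φ (exp (I * z))` for some `Φ` holomorphic on the unit disk (removable singularity at `0`) with no
zeros off `0`; write `Φ q = q ^ k * g q` with `g 0 ≠ 0`. High up in the half-plane, `I * f z` and
`k * I * z + log g (exp (I * z))` are continuous logarithms of the same function on a connected
set, so they differ by a constant; comparing `z` with `z + 2π` forces `k = 1`. Hence the periodic
function `f z - z` converges as `Im z → ∞`, and descends to a function holomorphic on the disk.
-/

open Complex Filter Function Set Asymptotics
open scoped Real Topology

local notation "I∞" => comap Complex.im atTop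

instance : NeBot I∞ := atTop_neBot.comap_of_surj im_surjective

lemma eventually_im_pos : ∀ᶠ z : ℂ in I∞, 0 < z.im :=
  tendsto_comap.eventually (eventually_gt_atTop 0)

lemma exists_forall_im_ge_of_eventually {P : ℂ → Prop} (h : ∀ᶠ z in I∞, P z) :
    ∃ M, ∀ z : ℂ, M ≤ z.im → P z := by
  obtain ⟨M, hM⟩ := eventually_atTop.mp (eventually_comap.mp h)
  exact ⟨M, fun z hz => hM _ hz z rfl⟩

lemma tendsto_add_const_atImInfty (c : ℝ) : Tendsto (fun z : ℂ => z + c) I∞ I∞ :=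
  tendsto_comap_iff.mpr (by simpa [comp_def] using tendsto_comap)

lemma qParam_two_pi (z : ℂ) : Periodic.qParam (2 * π) z = exp (I * z) := by
  rw [Periodic.qParam]
  congr 1
  push_cast
  field_simp

lemma exp_I_mul_add_two_pi (z : ℂ) : exp (I * (z + 2 * π)) = exp (I * z) := by
  rw [mul_add, exp_add, show I * (2 * π) = 2 * π * I by ring, exp_two_pi_mul_I, mul_one]

lemma tendsto_exp_I_mul_atImInfty : Tendsto (fun z => exp (I * z)) I∞ (𝓝 0) := by
  rw [← funext qParam_two_pi]
  exact (Periodic.qParam_tendsto (by positivity)).mono_right nhdsWithin_le_nhds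

lemma exists_im_pos_exp_I_mul_eq {q : ℂ} (hq0 : q ≠ 0) (hq1 : ‖q‖ < 1) :
    ∃ z : ℂ, 0 < z.im ∧ exp (I * z) = q := by
  refine ⟨-I * log q, ?_, ?_⟩
  · simpa [log_re] using Real.log_neg (norm_pos_iff.mpr hq0) hq1
  · rw [← mul_assoc, mul_neg, I_mul_I, neg_neg, one_mul, exp_log hq0]

lemma IsPreconnected.sub_eq_sub_of_exp_eq {α : Type*} [TopologicalSpace α] {S : Set α}
    (hS : IsPreconnected S) {A B : α → ℂ} (hA : ContinuousOn A S) (hB : ContinuousOn B S)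
    (hAB : ∀ z ∈ S, exp (A z) = exp (B z)) {a b : α} (ha : a ∈ S) (hb : b ∈ S) :
    A a - B a = A b - B b := by
  refine hS.constant_of_mapsTo (T := AddSubgroup.zmultiples (2 * π * I))
    (isDiscrete_iff_discreteTopology.mpr (NormedSpace.discreteTopology_zmultiples _))
    (hA.sub hB) (fun z hz => ?_) ha hb
  obtain ⟨n, hn⟩ := exp_eq_exp_iff_exists_int.mp (hAB z hz)
  exact AddSubgroup.mem_zmultiples_iff.mpr ⟨n, by rw [zsmul_eq_mul, Pi.sub_apply, hn]; ring⟩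

/-- The function on the unit disk whose pullback along `z ↦ exp (I * z)` is `φ` on the upper
half-plane; `φ` is replaced by `0` off the half-plane, where it need not be periodic. -/
noncomputable def halfPlaneCuspFunction (φ : ℂ → ℂ) : ℂ → ℂ :=
  Periodic.cuspFunction (2 * π) ({z : ℂ | 0 < z.im}.indicator φ)

section halfPlaneCuspFunction

variable {φ : ℂ → ℂ} (hper : ∀ z : ℂ, 0 < z.im → φ (z + 2 * π) = φ z)
include hper

lemma periodic_indicator_im_pos :
    Periodic ({z : ℂ | 0 < z.im}.indicator φ) ((2 * π : ℝ) : ℂ) := by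
  intro z
  by_cases hz : 0 < z.im
  · have hz' : 0 < (z + ((2 * π : ℝ) : ℂ)).im := by simpa using hz
    simp only [indicator_of_mem (show z ∈ {z : ℂ | 0 < z.im} from hz),
      indicator_of_mem (show _ ∈ {z : ℂ | 0 < z.im} from hz')]
    push_cast
    exact hper z hz
  · have hz' : ¬ 0 < (z + ((2 * π : ℝ) : ℂ)).im := by simpa using hz
    simp only [indicator_of_notMem (show z ∉ {z : ℂ | 0 < z.im} from hz),
      indicator_of_notMem (show _ ∉ {z : ℂ | 0 < z.im} from hz')]

lemma halfPlaneCuspFunction_exp_I_mul {z : ℂ} (hz : 0 < z.im) :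
    halfPlaneCuspFunction φ (exp (I * z)) = φ z := by
  rw [halfPlaneCuspFunction, ← qParam_two_pi, Periodic.eq_cuspFunction (by positivity)
    (periodic_indicator_im_pos hper), indicator_of_mem (show z ∈ {z : ℂ | 0 < z.im} from hz)]

lemma differentiableOn_halfPlaneCuspFunction (hφ : DifferentiableOn ℂ φ {z : ℂ | 0 < z.im})
    (hbd : BoundedAtFilter I∞ φ) :
    DifferentiableOn ℂ (halfPlaneCuspFunction φ) (Metric.ball 0 1) := by
  have hdiff : ∀ z : ℂ, 0 < z.im → DifferentiableAt ℂ ({z : ℂ | 0 < z.im}.indicator φ) z :=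
    fun z hz => (hφ.differentiableAt (UpperHalfPlane.isOpen_upperHalfPlaneSet.mem_nhds hz))
      |>.congr_of_eventuallyEq (eventually_of_mem
        (UpperHalfPlane.isOpen_upperHalfPlaneSet.mem_nhds hz) fun w hw => indicator_of_mem hw φ)
  intro q hq
  rw [mem_ball_zero_iff] at hq
  by_cases hq0 : q = 0
  · subst hq0
    refine (Periodic.differentiableAt_cuspFunction_zero (by positivity)
      (periodic_indicator_im_pos hper) (eventually_im_pos.mono hdiff) ?_).differentiableWithinAt
    exact hbd.congr' (eventually_im_pos.mono fun z (hz : z ∈ {z : ℂ | 0 < z.im}) =>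
      (indicator_of_mem hz φ).symm) EventuallyEq.rfl
  · obtain ⟨z, hz, rfl⟩ := exists_im_pos_exp_I_mul_eq hq0 hq
    rw [← qParam_two_pi]
    exact (Periodic.differentiableAt_cuspFunction (by positivity)
      (periodic_indicator_im_pos hper) (hdiff z hz)).differentiableWithinAt

lemma exists_eventually_eq_exp_I_mul_pow_mul (hφ : DifferentiableOn ℂ φ {z : ℂ | 0 < z.im})
    (hbd : BoundedAtFilter I∞ φ) (hne : ∃ᶠ z in I∞, φ z ≠ 0) :
    ∃ (k : ℕ) (g : ℂ → ℂ), AnalyticAt ℂ g 0 ∧ g 0 ≠ 0 ∧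
      ∀ᶠ z in I∞, φ z = exp (I * z) ^ k * g (exp (I * z)) := by
  have hΦ : AnalyticAt ℂ (halfPlaneCuspFunction φ) 0 :=
    (differentiableOn_halfPlaneCuspFunction hper hφ hbd).analyticAt
      (Metric.ball_mem_nhds 0 one_pos)
  have hpull : ∀ᶠ z in I∞, halfPlaneCuspFunction φ (exp (I * z)) = φ z :=
    eventually_im_pos.mono fun z hz => halfPlaneCuspFunction_exp_I_mul hper hz
  have hnz : ¬ ∀ᶠ q in 𝓝 0, halfPlaneCuspFunction φ q = 0 := fun h => by
    obtain ⟨z, hz, hΦz, hpull⟩ :=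
      (hne.and_eventually ((tendsto_exp_I_mul_atImInfty.eventually h).and hpull)).exists
    exact hz (hpull ▸ hΦz)
  obtain ⟨k, g, hg, hg0, hfac⟩ := hΦ.exists_eventuallyEq_pow_smul_nonzero_iff.mpr hnz
  refine ⟨k, g, hg, hg0, ?_⟩
  filter_upwards [tendsto_exp_I_mul_atImInfty.eventually hfac, hpull] with z hfac hpull
  rw [← hpull, hfac, sub_zero, smul_eq_mul]

end halfPlaneCuspFunction

lemma exists_eventually_eq_of_exp_eq_pow_mul {F g : ℂ → ℂ} {k : ℕ}
    (hF : ∀ᶠ z in I∞, ContinuousAt F z) (hg : AnalyticAt ℂ g 0) (hg0 : g 0 ≠ 0)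
    (hexp : ∀ᶠ z in I∞, exp (F z) = exp (I * z) ^ k * g (exp (I * z))) :
    ∃ (c : ℂ) (L : ℂ → ℂ), Tendsto L (𝓝 0) (𝓝 0) ∧
      ∀ᶠ z in I∞, F z = k * (I * z) + c + L (exp (I * z)) := by
  set L : ℂ → ℂ := fun q => log (g q / g 0)
  have hL : AnalyticAt ℂ L 0 := hg.div_const.clog (by simp [hg0])
  -- a continuous logarithm of the right-hand side of `hexp` near the cusp
  set B : ℂ → ℂ := fun z => k * (I * z) + log (g 0) + L (exp (I * z))
  have hB : ∀ᶠ z in I∞, ContinuousAt B z ∧ exp (F z) = exp (B z) := by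
    filter_upwards [hexp, tendsto_exp_I_mul_atImInfty.eventually
      (hL.eventually_analyticAt.and (hg.continuousAt.eventually_ne hg0))] with z hexp ⟨hLz, hgz⟩
    refine ⟨by fun_prop, ?_⟩
    rw [hexp]
    simp only [B, L, exp_add, exp_log hg0, exp_log (div_ne_zero hgz hg0), ← exp_nat_mul]
    field_simp
  obtain ⟨M, hM⟩ := exists_forall_im_ge_of_eventually (hF.and hB)
  have hS : IsPreconnected {z : ℂ | M ≤ z.im} := (convex_halfSpace_im_ge M).isPreconnected
  have hz₀ : M * I ∈ {z : ℂ | M ≤ z.im} := by simp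
  refine ⟨log (g 0) + (F (M * I) - B (M * I)), L,
    by simpa [L, hg0] using hL.continuousAt.tendsto, ?_⟩
  filter_upwards [tendsto_comap.eventually (eventually_ge_atTop M)] with z hz
  have hconst := hS.sub_eq_sub_of_exp_eq (fun z hz => (hM z hz).1.continuousWithinAt)
    (fun z hz => (hM z hz).2.1.continuousWithinAt) (fun z hz => (hM z hz).2.2) hz hz₀
  simp only [B] at hconst ⊢
  linear_combination hconst

lemma tendsto_sub_self_atImInfty {f : ℂ → ℂ} (hf : DifferentiableOn ℂ f {z : ℂ | 0 < z.im})
    (hmaps : ∀ z : ℂ, 0 < z.im → 0 < (f z).im)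
    (hper : ∀ z : ℂ, 0 < z.im → f (z + 2 * π) = f z + 2 * π) :
    ∃ c, Tendsto (fun z => f z - z) I∞ (𝓝 c) := by
  have hbd : BoundedAtFilter I∞ fun z => exp (I * f z) := by
    refine isBigO_iff.mpr ⟨1, eventually_im_pos.mono fun z hz => ?_⟩
    simpa [norm_exp] using (hmaps z hz).le
  obtain ⟨k, g, hg, hg0, hfac⟩ := exists_eventually_eq_exp_I_mul_pow_mul
    (fun z hz => by rw [hper z hz, exp_I_mul_add_two_pi]) (hf.const_mul I).cexp hbd
    (Frequently.of_forall fun z => exp_ne_zero _)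
  obtain ⟨c, L, hL, hlift⟩ := exists_eventually_eq_of_exp_eq_pow_mul
    (eventually_im_pos.mono fun z hz =>
      (hf.differentiableAt (UpperHalfPlane.isOpen_upperHalfPlaneSet.mem_nhds hz)).continuousAt
        |>.const_mul I) hg hg0 hfac
  have hk : (k : ℂ) = 1 := by
    obtain ⟨z, ⟨hz, hz'⟩, hzpos⟩ :=
      ((hlift.and ((tendsto_add_const_atImInfty (2 * π)).eventually hlift)).and
        eventually_im_pos).exists
    -- under `z ↦ z + 2π` the left side of `hlift` gains `2πI`, the right side `2πIk`
    push_cast at hz'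
    rw [hper z hzpos, exp_I_mul_add_two_pi] at hz'
    have h : 2 * π * I * (k - 1) = 0 := by linear_combination hz - hz'
    simpa [sub_eq_zero, two_pi_I_ne_zero] using h
  refine ⟨-I * c, ?_⟩
  have hlim : Tendsto (fun z => -I * (c + L (exp (I * z)))) I∞ (𝓝 (-I * c)) := by
    simpa using ((hL.comp tendsto_exp_I_mul_atImInfty).const_add c).const_mul (-I)
  refine hlim.congr' ?_
  filter_upwards [hlift] with z hz
  rw [hk, one_mul] at hz
  linear_combination I * hz + (z - f z) * I_sq

/-- A holomorphic self-map `f` of the upper half-plane with `f(z + 2π) = f(z) + 2π` equals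
`z` plus a function holomorphic across the puncture, in the covering coordinate `w = e^{iz}`. -/
theorem parabolic_developing_map_structure (f : ℂ → ℂ)
    (hf : DifferentiableOn ℂ f {z : ℂ | 0 < z.im})
    (hmaps : ∀ z : ℂ, 0 < z.im → 0 < (f z).im)
    (hper : ∀ z : ℂ, 0 < z.im → f (z + 2 * Real.pi) = f z + 2 * Real.pi) :
    ∃ G : ℂ → ℂ, DifferentiableOn ℂ G (Metric.ball (0 : ℂ) 1) ∧
      ∀ z : ℂ, 0 < z.im → f z = z + G (Complex.exp (Complex.I * z)) := by
  have hper' : ∀ z : ℂ, 0 < z.im → f (z + 2 * π) - (z + 2 * π) = f z - z := fun z hz => by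
    rw [hper z hz]; ring
  obtain ⟨c, hc⟩ := tendsto_sub_self_atImInfty hf hmaps hper
  refine ⟨halfPlaneCuspFunction fun z => f z - z,
    differentiableOn_halfPlaneCuspFunction hper' (hf.sub differentiableOn_id) (hc.isBigO_one ℝ),
    fun z hz => ?_⟩
  rw [halfPlaneCuspFunction_exp_I_mul hper' hz]
  ring
end
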